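/- arXiv:1201.5168 — 2 statements merged into one kernel-verified Lean document; each statement's English description precedes it below -/
import Mathlib

section
/- Suppose T1 and T2 are rooted balanced binary phylogenetic trees of heights m1 and m2, respectively, with |L(T1) ∩ L(T2)| = t > 0. Then for every δ ∈ (0, 1/4), mast{T1, T2} ≥ 2^{g(m1,m2,t)}, where g(m1,m2,t) := ((m1+m2)·log(1−3δ) + log t)/(log(1−3δ) − log δ). -/
/-!
# Rooted binary phylogenetic trees

`RTree L` is the type of rooted binary trees with leaves labelled by elements of `L`:
every internal vertex has exactly two children (a left child and a right child), and
a tree with one leaf is a single vertex.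
-/

inductive RTree (L : Type) : Type
  | leaf : L → RTree L
  | node : RTree L → RTree L → RTree L

namespace RTree

variable {L : Type}

/-- The list of leaf labels of a rooted binary tree, read from left to right. -/
def leafList : RTree L → List L
  | leaf b => [b]
  | node l r => leafList l ++ leafList r

/-- The number of leaves of a rooted binary tree. -/
def numLeaves (T : RTree L) : ℕ := T.leafList.length

/-- The set of leaf labels of a rooted binary tree. -/
def leafSet (T : RTree L) : Set L := {b | b ∈ T.leafList}

/-- The height of a rooted binary tree: the maximum distance from the root to a leaf. -/
def height : RTree L → ℕ
  | leaf _ => 0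
  | node l r => max (height l) (height r) + 1

/-- A rooted binary tree is balanced if all of its leaves are at the same distance
from the root. -/
def IsBalanced : RTree L → Prop
  | leaf _ => True
  | node l r => IsBalanced l ∧ IsBalanced r ∧ height l = height r

/-- A rooted binary tree is phylogenetic if its leaves are labelled bijectively by a
finite set, i.e. all leaf labels are distinct. -/
def IsPhylo (T : RTree L) : Prop := T.leafList.Nodup

/-- `Embeds S T` is the subtree relation `S ⪯ T`: there is an injective map `f` from the
vertices of `S` to the vertices of `T` such that `f x = x` for every leaf `x` of `S`
(leaves being identified across trees by their labels) and
`f (x ∧ y) = f x ∧ f y` for all vertices `x`, `y` of `S`, where `∧` denotes the most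
recent common ancestor.  Equivalently (for trees with distinct leaf labels), `S` is the
restriction of `T` to the leaf set of `S`, up to rooted isomorphism; this structural
characterization is taken as the definition. -/
inductive Embeds : RTree L → RTree L → Prop
  | leaf (b : L) : Embeds (RTree.leaf b) (RTree.leaf b)
  | left {S l r : RTree L} : Embeds S l → Embeds S (RTree.node l r)
  | right {S l r : RTree L} : Embeds S r → Embeds S (RTree.node l r)
  | pair {s₁ s₂ l r : RTree L} :
      Embeds s₁ l → Embeds s₂ r → Embeds (RTree.node s₁ s₂) (RTree.node l r)
  | pair_swap {s₁ s₂ l r : RTree L} :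
      Embeds s₁ r → Embeds s₂ l → Embeds (RTree.node s₁ s₂) (RTree.node l r)

/-- `mast T₁ T₂` is the maximum cardinality of a subset `X ⊆ L(T₁) ∩ L(T₂)` such that
the restrictions `T₁|X` and `T₂|X` are isomorphic; equivalently, the maximum number of
leaves of a rooted binary phylogenetic tree `S` with `S ⪯ T₁` and `S ⪯ T₂`. -/
noncomputable def mast (T₁ T₂ : RTree L) : ℕ :=
  sSup {n | ∃ S : RTree L, S.IsPhylo ∧ Embeds S T₁ ∧ Embeds S T₂ ∧ S.numLeaves = n}

end RTree

/-! For `0 < δ ≤ a` with `a + 2δ ≤ 1` and `c = log (a / δ)` one proves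
`|L(T₁) ∩ L(T₂)| · a ^ (h(T₁) + h(T₂)) ≤ mast{T₁, T₂} ^ c` by induction on `h(T₁) + h(T₂)`;
the theorem is the case `a = 1 - 3δ`, after taking logarithms.
Write `T₁ = (A, B)`, `T₂ = (C, D)` and split the `t` common leaves into `t_AC, t_AD, t_BC, t_BD`.
If both counts of one matching (`AC, BD` or `AD, BC`) are at least `δt`, agreement subtrees of the
two matched pairs join into one of at least twice the smaller size, and the doubling pays for the
factor `2 ^ c = a / δ` lost over two levels. Otherwise two small counts share a subtree, and
deleting it keeps at least `(1 - 2δ)t ≥ at` common leaves at the cost of one level. -/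

namespace RTree

variable {L : Type}

@[simp] lemma leafList_leaf (b : L) : (leaf b).leafList = [b] := rfl

@[simp] lemma leafList_node (l r : RTree L) :
    (node l r).leafList = l.leafList ++ r.leafList := rfl

@[simp] lemma height_node (l r : RTree L) :
    (node l r).height = max l.height r.height + 1 := rfl

@[simp] lemma numLeaves_node (l r : RTree L) :
    (node l r).numLeaves = l.numLeaves + r.numLeaves := List.length_append

@[simp] lemma leafSet_leaf (b : L) : (leaf b).leafSet = {b} := by
  ext; simp [leafSet]

@[simp] lemma leafSet_node (l r : RTree L) :
    (node l r).leafSet = l.leafSet ∪ r.leafSet := by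
  ext; simp [leafSet]

lemma leafSet_finite (T : RTree L) : T.leafSet.Finite := T.leafList.finite_toSet

lemma height_lt_height_node_left (l r : RTree L) : l.height < (node l r).height := by
  rw [height_node]; omega

lemma height_lt_height_node_right (l r : RTree L) : r.height < (node l r).height := by
  rw [height_node]; omega

lemma isPhylo_leaf (b : L) : (leaf b).IsPhylo := List.nodup_singleton b

lemma isPhylo_node_iff {l r : RTree L} :
    (node l r).IsPhylo ↔ l.IsPhylo ∧ r.IsPhylo ∧ l.leafList.Disjoint r.leafList := by
  simp [IsPhylo, List.nodup_append, List.disjoint_iff_ne]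

lemma embeds_leaf_of_mem {b : L} : ∀ {T : RTree L}, b ∈ T.leafList → Embeds (leaf b) T
  | leaf _, h => by
    rw [leafList_leaf, List.mem_singleton] at h
    exact h ▸ .leaf b
  | node _ _, h => (List.mem_append.mp h).elim (.left ∘ embeds_leaf_of_mem)
      (.right ∘ embeds_leaf_of_mem)

lemma Embeds.leafList_subset {S T : RTree L} (h : Embeds S T) : S.leafList ⊆ T.leafList := by
  induction h with
  | leaf => exact List.Subset.refl _
  | left _ ih => exact List.subset_append_of_subset_left _ ih
  | right _ ih => exact List.subset_append_of_subset_right _ ih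
  | pair _ _ ih₁ ih₂ =>
    exact List.append_subset.mpr ⟨List.subset_append_of_subset_left _ ih₁,
      List.subset_append_of_subset_right _ ih₂⟩
  | pair_swap _ _ ih₁ ih₂ =>
    exact List.append_subset.mpr ⟨List.subset_append_of_subset_right _ ih₁,
      List.subset_append_of_subset_left _ ih₂⟩

lemma Embeds.numLeaves_le {S T : RTree L} (hS : S.IsPhylo) (h : Embeds S T) :
    S.numLeaves ≤ T.numLeaves :=
  (List.subperm_of_subset hS h.leafList_subset).length_le

noncomputable def commonCard (T₁ T₂ : RTree L) : ℕ := (T₁.leafSet ∩ T₂.leafSet).ncard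

lemma commonCard_node_left {l r : RTree L} (hlr : l.leafList.Disjoint r.leafList)
    (T : RTree L) : commonCard (node l r) T = commonCard l T + commonCard r T := by
  rw [commonCard, leafSet_node, Set.union_inter_distrib_right]
  exact Set.ncard_union_eq
    ((Set.disjoint_left.mpr fun _ hl hr => hlr hl hr).mono Set.inter_subset_left
      Set.inter_subset_left)
    ((leafSet_finite T).inter_of_right _) ((leafSet_finite T).inter_of_right _)

lemma commonCard_comm (T₁ T₂ : RTree L) : commonCard T₁ T₂ = commonCard T₂ T₁ := by
  rw [commonCard, commonCard, Set.inter_comm]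

lemma commonCard_node_right {l r : RTree L} (hlr : l.leafList.Disjoint r.leafList)
    (T : RTree L) : commonCard T (node l r) = commonCard T l + commonCard T r := by
  rw [commonCard_comm, commonCard_node_left hlr, commonCard_comm l, commonCard_comm r]

lemma commonCard_leaf_left_le_one (b : L) (T : RTree L) : commonCard (leaf b) T ≤ 1 := by
  rw [commonCard, leafSet_leaf]
  exact (Set.ncard_le_ncard Set.inter_subset_left).trans (Set.ncard_singleton b).le

lemma commonCard_leaf_right_le_one (T : RTree L) (b : L) : commonCard T (leaf b) ≤ 1 :=
  commonCard_comm T (leaf b) ▸ commonCard_leaf_left_le_one b T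

lemma commonCard_node_node {A B C D : RTree L} (hAB : A.leafList.Disjoint B.leafList)
    (hCD : C.leafList.Disjoint D.leafList) :
    commonCard (node A B) (node C D) =
      commonCard A C + commonCard A D + commonCard B C + commonCard B D := by
  rw [commonCard_node_left hAB, commonCard_node_right hCD, commonCard_node_right hCD]
  ring

lemma bddAbove_mastSet (T₁ T₂ : RTree L) :
    BddAbove {n | ∃ S : RTree L, S.IsPhylo ∧ Embeds S T₁ ∧ Embeds S T₂ ∧ S.numLeaves = n} :=
  ⟨T₁.numLeaves, fun _ ⟨_, hS, h₁, _, hn⟩ => hn ▸ h₁.numLeaves_le hS⟩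

lemma le_mast {S T₁ T₂ : RTree L} (hS : S.IsPhylo) (h₁ : Embeds S T₁) (h₂ : Embeds S T₂) :
    S.numLeaves ≤ mast T₁ T₂ :=
  le_csSup (bddAbove_mastSet T₁ T₂) ⟨S, hS, h₁, h₂, rfl⟩

lemma exists_numLeaves_eq_mast {T₁ T₂ : RTree L} (h : 0 < commonCard T₁ T₂) :
    ∃ S : RTree L, S.IsPhylo ∧ Embeds S T₁ ∧ Embeds S T₂ ∧ S.numLeaves = mast T₁ T₂ := by
  obtain ⟨b, hb₁, hb₂⟩ := Set.nonempty_of_ncard_ne_zero h.ne'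
  refine Nat.sSup_mem ?_ (bddAbove_mastSet T₁ T₂)
  exact ⟨1, leaf b, isPhylo_leaf b, embeds_leaf_of_mem hb₁, embeds_leaf_of_mem hb₂, rfl⟩

lemma one_le_mast {T₁ T₂ : RTree L} (h : 0 < commonCard T₁ T₂) : 1 ≤ mast T₁ T₂ := by
  obtain ⟨b, hb₁, hb₂⟩ := Set.nonempty_of_ncard_ne_zero h.ne'
  exact le_mast (isPhylo_leaf b) (embeds_leaf_of_mem hb₁) (embeds_leaf_of_mem hb₂)

lemma mast_mono {U W T₁ T₂ : RTree L} (h₁ : ∀ S, Embeds S U → Embeds S T₁)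
    (h₂ : ∀ S, Embeds S W → Embeds S T₂) : mast U W ≤ mast T₁ T₂ :=
  csSup_le_csSup' (bddAbove_mastSet T₁ T₂)
    fun _ ⟨S, hS, hU, hW, hn⟩ => ⟨S, hS, h₁ S hU, h₂ S hW, hn⟩

lemma mast_add_mast_le_mast_node_node {A B C D : RTree L} (hAB : A.leafList.Disjoint B.leafList)
    (hAC : 0 < commonCard A C) (hBD : 0 < commonCard B D) :
    mast A C + mast B D ≤ mast (node A B) (node C D) := by
  obtain ⟨S₁, hS₁, hS₁A, hS₁C, hn₁⟩ := exists_numLeaves_eq_mast hAC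
  obtain ⟨S₂, hS₂, hS₂B, hS₂D, hn₂⟩ := exists_numLeaves_eq_mast hBD
  have hS : (node S₁ S₂).IsPhylo := isPhylo_node_iff.mpr
    ⟨hS₁, hS₂, fun _ h₁ h₂ => hAB (hS₁A.leafList_subset h₁) (hS₂B.leafList_subset h₂)⟩
  simpa [hn₁, hn₂] using le_mast hS (.pair hS₁A hS₂B) (.pair hS₁C hS₂D)

lemma Embeds.node_swap {S l r : RTree L} (h : Embeds S (node l r)) : Embeds S (node r l) := by
  cases h with
  | left h => exact .right h
  | right h => exact .left h
  | pair h₁ h₂ => exact .pair_swap h₁ h₂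
  | pair_swap h₁ h₂ => exact .pair h₁ h₂

lemma mast_node_swap_right (T l r : RTree L) : mast T (node l r) = mast T (node r l) :=
  le_antisymm (mast_mono (fun _ => id) fun _ => Embeds.node_swap)
    (mast_mono (fun _ => id) fun _ => Embeds.node_swap)

lemma mul_pow_le_rpow_of_le_two_mul {δ a c t t' m M : ℝ} {k n : ℕ} (hδ : 0 < δ) (ha₀ : 0 ≤ a)
    (ha₁ : a ≤ 1) (hc : 0 ≤ c) (h2c : (2 : ℝ) ^ c = a / δ) (ht : 0 ≤ t) (hm : 0 ≤ m)
    (htt' : δ * t ≤ t') (hkn : k + 2 ≤ n) (hmM : 2 * m ≤ M) (h : t' * a ^ k ≤ m ^ c) :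
    t * a ^ n ≤ M ^ c :=
  calc t * a ^ n ≤ t * a ^ (k + 2) := by
        gcongr ?_ * ?_
        exact pow_le_pow_of_le_one ha₀ ha₁ hkn
    _ = a * (a / δ * ((δ * t) * a ^ k)) := by field_simp; ring
    _ ≤ a / δ * ((δ * t) * a ^ k) := mul_le_of_le_one_left (by positivity) ha₁
    _ ≤ 2 ^ c * m ^ c := by
        rw [h2c]
        gcongr
        exact (mul_le_mul_of_nonneg_right htt' (by positivity)).trans h
    _ = (2 * m) ^ c := (Real.mul_rpow zero_le_two hm).symm
    _ ≤ M ^ c := by gcongr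

lemma diag_or_antidiag_or_line_large {δ a p q r s : ℝ} (ha : a + 2 * δ ≤ 1) (hp : 0 ≤ p)
    (hq : 0 ≤ q) (hr : 0 ≤ r) (hs : 0 ≤ s) :
    (δ * (p + q + r + s) ≤ p ∧ δ * (p + q + r + s) ≤ s) ∨
      (δ * (p + q + r + s) ≤ q ∧ δ * (p + q + r + s) ≤ r) ∨
      a * (p + q + r + s) ≤ p + q ∨ a * (p + q + r + s) ≤ r + s ∨
      a * (p + q + r + s) ≤ p + r ∨ a * (p + q + r + s) ≤ q + s := by
  have hat : (a + 2 * δ) * (p + q + r + s) ≤ 1 * (p + q + r + s) :=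
    mul_le_mul_of_nonneg_right ha (by positivity)
  by_contra! h
  obtain ⟨hps, hqr, hpq, hrs, hpr, hqs⟩ := h
  rcases (lt_or_ge p _).imp_right hps with h₁ | h₁ <;>
    rcases (lt_or_ge q _).imp_right hqr with h₂ | h₂ <;> linarith

def MastBound (a c : ℝ) (T₁ T₂ : RTree L) : Prop :=
  (commonCard T₁ T₂ : ℝ) * a ^ (T₁.height + T₂.height) ≤ (mast T₁ T₂ : ℝ) ^ c

namespace MastBound

variable {a c : ℝ}

lemma of_commonCard_le_one {T₁ T₂ : RTree L} (ha₀ : 0 ≤ a) (ha₁ : a ≤ 1) (hc : 0 ≤ c)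
    (h : commonCard T₁ T₂ ≤ 1) : MastBound a c T₁ T₂ := by
  unfold MastBound
  rcases (commonCard T₁ T₂).eq_zero_or_pos with h₀ | hpos
  · rw [h₀, Nat.cast_zero, zero_mul]
    positivity
  · calc (commonCard T₁ T₂ : ℝ) * a ^ (T₁.height + T₂.height) ≤ 1 * 1 := by
          gcongr
          · exact_mod_cast h
          · exact pow_le_one₀ ha₀ ha₁
      _ = 1 ^ c := by rw [mul_one, Real.one_rpow]
      _ ≤ (mast T₁ T₂ : ℝ) ^ c := by gcongr; exact_mod_cast one_le_mast hpos

lemma of_le_mul {T₁ T₂ U W : RTree L} (ha₀ : 0 ≤ a) (ha₁ : a ≤ 1) (hc : 0 ≤ c)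
    (hUW : MastBound a c U W) (hcard : a * commonCard T₁ T₂ ≤ commonCard U W)
    (hheight : U.height + W.height + 1 ≤ T₁.height + T₂.height)
    (hmast : mast U W ≤ mast T₁ T₂) : MastBound a c T₁ T₂ :=
  calc (commonCard T₁ T₂ : ℝ) * a ^ (T₁.height + T₂.height)
      ≤ commonCard T₁ T₂ * a ^ (U.height + W.height + 1) := by
        gcongr ?_ * ?_
        exact pow_le_pow_of_le_one ha₀ ha₁ hheight
    _ = (a * commonCard T₁ T₂) * a ^ (U.height + W.height) := by ring
    _ ≤ commonCard U W * a ^ (U.height + W.height) := by gcongr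
    _ ≤ (mast U W : ℝ) ^ c := hUW
    _ ≤ (mast T₁ T₂ : ℝ) ^ c := by gcongr

lemma node_node_of_diag {δ : ℝ} {A B C D : RTree L} (hδ : 0 < δ) (ha₀ : 0 ≤ a) (ha₁ : a ≤ 1)
    (hc : 0 ≤ c) (h2c : (2 : ℝ) ^ c = a / δ) (hAB : A.leafList.Disjoint B.leafList)
    (hAC : δ * commonCard (node A B) (node C D) ≤ commonCard A C)
    (hBD : δ * commonCard (node A B) (node C D) ≤ commonCard B D)
    (bAC : MastBound a c A C) (bBD : MastBound a c B D) :
    MastBound a c (node A B) (node C D) := by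
  rcases (commonCard (node A B) (node C D)).eq_zero_or_pos with h₀ | hpos
  · exact of_commonCard_le_one ha₀ ha₁ hc (h₀ ▸ zero_le_one)
  have hpos' : (0 : ℝ) < δ * commonCard (node A B) (node C D) := by positivity
  have hmast := mast_add_mast_le_mast_node_node hAB (by exact_mod_cast hpos'.trans_le hAC)
    (by exact_mod_cast hpos'.trans_le hBD)
  have := height_lt_height_node_left A B
  have := height_lt_height_node_right A B
  have := height_lt_height_node_left C D
  have := height_lt_height_node_right C D
  rcases le_total (mast A C) (mast B D) with hle | hle
  · exact mul_pow_le_rpow_of_le_two_mul hδ ha₀ ha₁ hc h2c (by positivity) (by positivity) hAC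
      (by omega) (by exact_mod_cast (by omega)) bAC
  · exact mul_pow_le_rpow_of_le_two_mul hδ ha₀ ha₁ hc h2c (by positivity) (by positivity) hBD
      (by omega) (by exact_mod_cast (by omega)) bBD

lemma node_swap_right {T l r : RTree L} (h : MastBound a c T (node r l)) :
    MastBound a c T (node l r) := by
  have hcard : commonCard T (node l r) = commonCard T (node r l) := by
    rw [commonCard, commonCard, leafSet_node, leafSet_node, Set.union_comm]
  rwa [MastBound, hcard, height_node, max_comm, ← height_node, mast_node_swap_right]

lemma node_node {δ : ℝ} {A B C D : RTree L} (hδ : 0 < δ) (hδa : δ ≤ a) (ha : a + 2 * δ ≤ 1)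
    (hp₁ : (node A B).IsPhylo) (hp₂ : (node C D).IsPhylo)
    (ih : ∀ U W : RTree L, U.height + W.height < (node A B).height + (node C D).height →
      U.IsPhylo → W.IsPhylo → MastBound a (Real.logb 2 (a / δ)) U W) :
    MastBound a (Real.logb 2 (a / δ)) (node A B) (node C D) := by
  obtain ⟨hA, hB, hAB⟩ := isPhylo_node_iff.mp hp₁
  obtain ⟨hC, hD, hCD⟩ := isPhylo_node_iff.mp hp₂
  have ha₀ : 0 < a := hδ.trans_le hδa
  have ha₁ : a ≤ 1 := by linarith
  have hc : 0 ≤ Real.logb 2 (a / δ) := Real.logb_nonneg one_lt_two ((one_le_div hδ).mpr hδa)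
  have h2c : (2 : ℝ) ^ Real.logb 2 (a / δ) = a / δ :=
    Real.rpow_logb two_pos (by norm_num) (by positivity)
  have := height_lt_height_node_left A B
  have := height_lt_height_node_right A B
  have := height_lt_height_node_left C D
  have := height_lt_height_node_right C D
  have hsplit := commonCard_node_node hAB hCD
  rcases diag_or_antidiag_or_line_large ha (commonCard A C).cast_nonneg
      (commonCard A D).cast_nonneg (commonCard B C).cast_nonneg (commonCard B D).cast_nonneg
    with ⟨hAC, hBD⟩ | ⟨hAD, hBC⟩ | hAT | hBT | hTC | hTD
  · exact node_node_of_diag hδ ha₀.le ha₁ hc h2c hAB (by rw [hsplit]; push_cast; exact hAC)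
      (by rw [hsplit]; push_cast; exact hBD) (ih A C (by omega) hA hC) (ih B D (by omega) hB hD)
  · refine node_swap_right (node_node_of_diag hδ ha₀.le ha₁ hc h2c hAB ?_ ?_
      (ih A D (by omega) hA hD) (ih B C (by omega) hB hC)) <;>
    · rw [commonCard_node_node hAB hCD.symm]; push_cast; linarith
  · exact of_le_mul ha₀.le ha₁ hc (ih A (node C D) (by omega) hA hp₂)
      (by rw [hsplit, commonCard_node_right hCD]; push_cast; exact hAT) (by omega)
      (mast_mono (fun _ => .left) fun _ => id)
  · exact of_le_mul ha₀.le ha₁ hc (ih B (node C D) (by omega) hB hp₂)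
      (by rw [hsplit, commonCard_node_right hCD]; push_cast; exact hBT) (by omega)
      (mast_mono (fun _ => .right) fun _ => id)
  · exact of_le_mul ha₀.le ha₁ hc (ih (node A B) C (by omega) hp₁ hC)
      (by rw [hsplit, commonCard_node_left hAB]; push_cast; exact hTC) (by omega)
      (mast_mono (fun _ => id) fun _ => .left)
  · exact of_le_mul ha₀.le ha₁ hc (ih (node A B) D (by omega) hp₁ hD)
      (by rw [hsplit, commonCard_node_left hAB]; push_cast; exact hTD) (by omega)
      (mast_mono (fun _ => id) fun _ => .right)

theorem of_isPhylo {δ : ℝ} (hδ : 0 < δ) (hδa : δ ≤ a) (ha : a + 2 * δ ≤ 1) {T₁ T₂ : RTree L}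
    (h₁ : T₁.IsPhylo) (h₂ : T₂.IsPhylo) : MastBound a (Real.logb 2 (a / δ)) T₁ T₂ := by
  have ha₀ : 0 ≤ a := hδ.le.trans hδa
  have ha₁ : a ≤ 1 := by linarith
  have hc : 0 ≤ Real.logb 2 (a / δ) := Real.logb_nonneg one_lt_two ((one_le_div hδ).mpr hδa)
  induction hn : T₁.height + T₂.height using Nat.strong_induction_on generalizing T₁ T₂ with
  | _ n ih =>
  cases T₁ with
  | leaf b => exact of_commonCard_le_one ha₀ ha₁ hc (commonCard_leaf_left_le_one b T₂)
  | node A B =>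
    cases T₂ with
    | leaf b => exact of_commonCard_le_one ha₀ ha₁ hc (commonCard_leaf_right_le_one _ b)
    | node C D => exact node_node hδ hδa ha h₁ h₂ fun U W hlt hU hW => ih _ (hn ▸ hlt) hU hW rfl

end MastBound

end RTree

theorem stmt_12_general {L : Type} (m₁ m₂ t : ℕ) (T₁ T₂ : RTree L) (δ : ℝ)
    (h₁ : T₁.IsPhylo) (h₂ : T₂.IsPhylo)
    (hm₁ : T₁.height = m₁) (hm₂ : T₂.height = m₂)
    (ht : (T₁.leafSet ∩ T₂.leafSet).ncard = t) (ht0 : 0 < t)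
    (hδ : δ ∈ Set.Ioo (0 : ℝ) (1/4)) :
    (2 : ℝ) ^ ((((m₁ : ℝ) + m₂) * Real.logb 2 (1 - 3 * δ) + Real.logb 2 (t : ℝ)) /
        (Real.logb 2 (1 - 3 * δ) - Real.logb 2 δ))
      ≤ (RTree.mast T₁ T₂ : ℝ) := by
  obtain ⟨hδ₀, hδ₄⟩ := hδ
  have ha : 0 < 1 - 3 * δ := by linarith
  have hc : 0 < Real.logb 2 ((1 - 3 * δ) / δ) :=
    Real.logb_pos one_lt_two ((one_lt_div hδ₀).mpr (by linarith))
  have hX : 0 < (t : ℝ) * (1 - 3 * δ) ^ (m₁ + m₂) := by positivity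
  have hbound : (t : ℝ) * (1 - 3 * δ) ^ (m₁ + m₂) ≤
      (RTree.mast T₁ T₂ : ℝ) ^ Real.logb 2 ((1 - 3 * δ) / δ) := by
    have := RTree.MastBound.of_isPhylo (a := 1 - 3 * δ) hδ₀ (by linarith) (by linarith) h₁ h₂
    rwa [RTree.MastBound, RTree.commonCard, ht, hm₁, hm₂] at this
  have hexponent : (((m₁ : ℝ) + m₂) * Real.logb 2 (1 - 3 * δ) + Real.logb 2 t) /
      (Real.logb 2 (1 - 3 * δ) - Real.logb 2 δ) =
      Real.logb 2 ((t : ℝ) * (1 - 3 * δ) ^ (m₁ + m₂)) * (Real.logb 2 ((1 - 3 * δ) / δ))⁻¹ := by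
    rw [Real.logb_mul (by positivity) (by positivity), Real.logb_pow,
      Real.logb_div ha.ne' hδ₀.ne', div_eq_mul_inv]
    push_cast
    ring
  rw [hexponent, Real.rpow_mul zero_le_two, Real.rpow_logb two_pos (by norm_num) hX,
    Real.rpow_inv_le_iff_of_pos hX.le (by positivity) hc]
  exact hbound

/-- If `T₁`, `T₂` are rooted balanced binary phylogenetic trees of
heights `m₁`, `m₂` with `|L(T₁) ∩ L(T₂)| = t > 0`, then for every `δ ∈ (0,1/4)`,
`mast{T₁,T₂} ≥ 2^{g(m₁,m₂,t)}` where
`g(m₁,m₂,t) = ((m₁+m₂)·log(1-3δ) + log t)/(log(1-3δ) - log δ)` (logarithms base 2). -/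
theorem stmt_12 {L : Type} (m₁ m₂ t : ℕ) (T₁ T₂ : RTree L) (δ : ℝ)
    (h₁ : T₁.IsPhylo) (h₂ : T₂.IsPhylo)
    (hbal₁ : T₁.IsBalanced) (hbal₂ : T₂.IsBalanced)
    (hm₁ : T₁.height = m₁) (hm₂ : T₂.height = m₂)
    (ht : (T₁.leafSet ∩ T₂.leafSet).ncard = t) (ht0 : 0 < t)
    (hδ : δ ∈ Set.Ioo (0 : ℝ) (1/4)) :
    (2 : ℝ) ^ ((((m₁ : ℝ) + m₂) * Real.logb 2 (1 - 3 * δ) + Real.logb 2 (t : ℝ)) /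
        (Real.logb 2 (1 - 3 * δ) - Real.logb 2 δ))
      ≤ (RTree.mast T₁ T₂ : ℝ) :=
  stmt_12_general m₁ m₂ t T₁ T₂ δ h₁ h₂ hm₁ hm₂ ht ht0 hδ
end

section
/- Let δ ∈ (0, 1/2) and set α := (1 + log(1−δ))/(1 − log δ). If m, a, d, e are nonnegative integers with e ≤ m and 2^m · (1/4)^a · (δ/2)^d · (1−δ)^e ≤ 1, then a + d ≥ α·m. -/
/-- Let `δ ∈ (0,1/2)` and `α := (1 + log(1-δ))/(1 - log δ)` (logs
base 2).  If `m, a, d, e` are nonnegative integers with `e ≤ m` and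
`2^m · (1/4)^a · (δ/2)^d · (1-δ)^e ≤ 1`, then `a + d ≥ α·m`. -/
theorem stmt_18 (δ : ℝ) (hδ : δ ∈ Set.Ioo (0 : ℝ) (1/2)) (m a d e : ℕ) (hem : e ≤ m)
    (hle : (2 : ℝ) ^ m * (1/4 : ℝ) ^ a * (δ / 2) ^ d * (1 - δ) ^ e ≤ 1) :
    (1 + Real.logb 2 (1 - δ)) / (1 - Real.logb 2 δ) * m ≤ (a : ℝ) + d := by
  obtain ⟨hδ0, hδ2⟩ := hδ
  have h1δ : (0:ℝ) < 1 - δ := by linarith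
  set x := Real.logb 2 δ with hx
  set y := Real.logb 2 (1 - δ) with hy
  have hhalf : Real.logb 2 (1/2 : ℝ) = -1 := by
    rw [one_div, Real.logb_inv, Real.logb_self_eq_one] <;> norm_num
  have hxlt : x < -1 := by
    have := Real.logb_lt_logb (b := 2) (by norm_num) hδ0 hδ2
    rw [hhalf] at this; exact this
  have hygt : -1 < y := by
    have := Real.logb_lt_logb (b := 2) (by norm_num) (by norm_num) (by linarith : (1/2:ℝ) < 1 - δ)
    rw [hhalf] at this; exact this
  have hylt : y < 0 := Real.logb_neg (by norm_num) h1δ (by linarith)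
  have h0 : Real.logb 2 ((2 : ℝ) ^ m * (1/4 : ℝ) ^ a * (δ / 2) ^ d * (1 - δ) ^ e) ≤ 0 :=
    Real.logb_nonpos (by norm_num) (by positivity) hle
  rw [Real.logb_mul (by positivity) (by positivity),
      Real.logb_mul (by positivity) (by positivity),
      Real.logb_mul (by positivity) (by positivity),
      Real.logb_pow, Real.logb_pow, Real.logb_pow, Real.logb_pow] at h0
  have h2 : Real.logb 2 (2:ℝ) = 1 := by simp [Real.logb_self_eq_one]
  have h4 : Real.logb 2 (1/4 : ℝ) = -2 := by
    rw [show (1/4 : ℝ) = ((2:ℝ) ^ (2:ℕ))⁻¹ by norm_num, Real.logb_inv, Real.logb_pow, h2]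
    norm_num
  have hd2 : Real.logb 2 (δ/2) = x - 1 := by
    rw [Real.logb_div (ne_of_gt hδ0) (by norm_num), h2]
  rw [h2, h4, hd2] at h0
  -- h0 : m*1 + a*(-2) + d*(x-1) + e*y ≤ 0
  have hem' : (e : ℝ) ≤ m := Nat.cast_le.mpr hem
  have ha0 : (0:ℝ) ≤ a := Nat.cast_nonneg a
  have hd0 : (0:ℝ) ≤ d := Nat.cast_nonneg d
  rw [div_mul_eq_mul_div, div_le_iff₀ (by linarith)]
  nlinarith [mul_nonneg ha0 (by linarith : (0:ℝ) ≤ -1 - x),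
    mul_nonneg (by linarith : (0:ℝ) ≤ (m:ℝ) - e) (by linarith : (0:ℝ) ≤ -y)]
end
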